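/- arXiv:1506.09175 — 3 statements merged into one kernel-verified Lean document; each statement's English description precedes it below -/
import Mathlib

section
/- Let f, g ∈ C^∞(ℝⁿ) and S ⊂ ℝ open. If λ ∈ ℝ is a regular value of f (i.e. ∇f(x) ≠ 0 for all x ∈ f⁻¹(λ)) and f satisfies the (g,S)-Malgrange condition at λ, then there exists a neighborhood U of λ such that ∇f(x) ≠ 0 for all x ∈ f⁻¹(U). -/
/-!
Regular values are stable because of two separate facts. Inside a ball `‖x‖ ≤ R`, the critical
points of `f` form a compact set, so their image is a compact set of critical values which does
not contain `λ`, and a neighbourhood of `λ` avoids it. Outside the ball, a critical point `x`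
would have `∇_g f(x) = 0`, contradicting the Malgrange bound `‖∇_g f(x)‖ · ‖x‖ ≥ δ > 0`.
-/

open Metric

variable {E : Type*} [NormedAddCommGroup E] [InnerProductSpace ℝ E] [CompleteSpace E]

/-- The component `∇_g f` of `∇f` orthogonal to `∇g`. -/
noncomputable def gradientAlong (g f : E → ℝ) (x : E) : E :=
  gradient f x - (inner ℝ (gradient f x) (gradient g x) / ‖gradient g x‖ ^ 2) • gradient g x

theorem gradientAlong_eq_zero_of_gradient_eq_zero {g f : E → ℝ} {x : E}
    (hx : gradient f x = 0) : gradientAlong g f x = 0 := by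
  simp [gradientAlong, hx]

theorem ContDiff.continuous_gradient {f : E → ℝ} {k : WithTop ℕ∞} (hf : ContDiff ℝ k f)
    (hk : k ≠ 0) : Continuous (gradient f) :=
  (InnerProductSpace.toDual ℝ E).symm.continuous.comp (hf.continuous_fderiv hk)

theorem isCompact_image_closedBall_inter_criticalPoints [ProperSpace E] {f : E → ℝ}
    (hf : ContDiff ℝ 1 f) (R : ℝ) :
    IsCompact (f '' (closedBall 0 R ∩ {x | gradient f x = 0})) :=
  ((isCompact_closedBall 0 R).inter_right
    (isClosed_eq (hf.continuous_gradient one_ne_zero) continuous_const)).image hf.continuous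

theorem stmt_4_general {n : ℕ} (f g : EuclideanSpace ℝ (Fin n) → ℝ)
    (hf : ContDiff ℝ (⊤ : ℕ∞) f)
    (S : Set ℝ)
    (gradgf : EuclideanSpace ℝ (Fin n) → EuclideanSpace ℝ (Fin n))
    (hgradgf : ∀ x, gradgf x =
      gradient f x - ((inner ℝ (gradient f x) (gradient g x) : ℝ) / ‖gradient g x‖ ^ 2) •
        gradient g x)
    (lam : ℝ)
    -- `λ` is a regular value of `f`
    (hreg : ∀ x, f x = lam → gradient f x ≠ 0)
    -- `f` satisfies the `(g,S)`-Malgrange condition at `λ`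
    (hMal : ∃ U : Set ℝ, IsOpen U ∧ lam ∈ U ∧ ∃ R > (0 : ℝ),
      (∀ x, f x ∈ U → R < ‖x‖ → gradient g x ≠ 0) ∧
      (∀ x, f x ∈ U → R < ‖x‖ → g x ∈ S) ∧
      (∀ s ∈ S, ∃ δ > (0 : ℝ), ∀ x, f x ∈ U → R < ‖x‖ → g x = s →
        δ ≤ ‖gradgf x‖ * ‖x‖)) :
    ∃ U : Set ℝ, IsOpen U ∧ lam ∈ U ∧ ∀ x, f x ∈ U → gradient f x ≠ 0 := by
  obtain ⟨U, hU, hlamU, R, -, -, hgS, hδ⟩ := hMal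
  have hK := isCompact_image_closedBall_inter_criticalPoints (hf.of_le (by simp)) R
  refine ⟨U ∩ (f '' (closedBall 0 R ∩ {x | gradient f x = 0}))ᶜ,
    hU.inter hK.isClosed.isOpen_compl, ⟨hlamU, fun ⟨x, ⟨_, hx0⟩, hfx⟩ ↦ hreg x hfx hx0⟩, ?_⟩
  rintro x ⟨hxU, hxK⟩ hx0
  rcases le_or_gt ‖x‖ R with hle | hlt
  · exact hxK ⟨x, ⟨mem_closedBall_zero_iff.2 hle, hx0⟩, rfl⟩
  · obtain ⟨δ, hδpos, hδle⟩ := hδ (g x) (hgS x hxU hlt)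
    have hgradgf0 : gradgf x = 0 := by
      rw [hgradgf]
      exact gradientAlong_eq_zero_of_gradient_eq_zero hx0
    have := hδle x hxU hlt rfl
    rw [hgradgf0, norm_zero, zero_mul] at this
    linarith

/-- Property 3.2: if `λ` is a regular value of `f` and `f` satisfies the `(g,S)`-Malgrange
condition at `λ`, then there is a neighborhood `U` of `λ` with `∇f(x) ≠ 0` for all
`x ∈ f⁻¹(U)`. -/
theorem stmt_4 {n : ℕ} (f g : EuclideanSpace ℝ (Fin n) → ℝ)
    (hf : ContDiff ℝ (⊤ : ℕ∞) f) (hg : ContDiff ℝ (⊤ : ℕ∞) g)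
    (S : Set ℝ) (hS : IsOpen S)
    (gradgf : EuclideanSpace ℝ (Fin n) → EuclideanSpace ℝ (Fin n))
    (hgradgf : ∀ x, gradgf x =
      gradient f x - ((inner ℝ (gradient f x) (gradient g x) : ℝ) / ‖gradient g x‖ ^ 2) •
        gradient g x)
    (lam : ℝ)
    -- `λ` is a regular value of `f`
    (hreg : ∀ x, f x = lam → gradient f x ≠ 0)
    -- `f` satisfies the `(g,S)`-Malgrange condition at `λ`
    (hMal : ∃ U : Set ℝ, IsOpen U ∧ lam ∈ U ∧ ∃ R > (0 : ℝ),
      (∀ x, f x ∈ U → R < ‖x‖ → gradient g x ≠ 0) ∧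
      (∀ x, f x ∈ U → R < ‖x‖ → g x ∈ S) ∧
      (∀ s ∈ S, ∃ δ > (0 : ℝ), ∀ x, f x ∈ U → R < ‖x‖ → g x = s →
        δ ≤ ‖gradgf x‖ * ‖x‖)) :
    ∃ U : Set ℝ, IsOpen U ∧ lam ∈ U ∧ ∀ x, f x ∈ U → gradient f x ≠ 0 :=
  stmt_4_general f g hf S gradgf hgradgf lam hreg hMal
end

section
/- Let F = (f₁, f₂) : ℝ² → ℝ² be a C^∞ map whose Jacobian determinant Jac(F) := ∂f₁/∂x · ∂f₂/∂y − ∂f₁/∂y · ∂f₂/∂x equals 1 at every point, and suppose f₂ is a polynomial in two variables of degree at most 2. Then F is injective. -/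
/-!
Since `Jac F = 1`, the gradient of the quadratic `f₂` never vanishes, which forces its quadratic
part to be degenerate (`b² = 4ac`). The Hamiltonian vector field `(∂_y f₂, -∂_x f₂)` is then
affine with nilpotent linear part, so its integral curves are explicit quadratic curves; they
preserve `f₂`, and each level set of `f₂` (a line or a parabola) is a single such curve. Along it
`f₁` grows at unit speed, because `d/dt f₁(γ t) = Jac F (γ t) = 1`. Hence if `F p = F q`, then
`q = γ t` for the curve with `γ 0 = p`, and `f₁ q = f₁ p + t` forces `t = 0`.
-/

open InnerProductSpace

noncomputable section

local notation "ℝ²" => EuclideanSpace ℝ (Fin 2)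

/-- `rotCW (∇ f)` is the Hamiltonian vector field of `f`. -/
def rotCW (v : ℝ²) : ℝ² := !₂[v 1, -v 0]

@[simp] theorem rotCW_apply_zero (v : ℝ²) : rotCW v 0 = v 1 := rfl

@[simp] theorem rotCW_apply_one (v : ℝ²) : rotCW v 1 = -v 0 := rfl

theorem inner_rotCW (u v : ℝ²) : ⟪u, rotCW v⟫_ℝ = u 0 * v 1 - u 1 * v 0 := by
  simp [PiLp.inner_apply, Fin.sum_univ_two]
  ring

theorem eq_add_mul_of_hasDerivAt {φ : ℝ → ℝ} {c : ℝ} (h : ∀ t, HasDerivAt φ c t) (t : ℝ) :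
    φ t = φ 0 + c * t := by
  have h' : ∀ s, HasDerivAt (fun s => φ s - c * s) 0 s := fun s => by
    simpa using (h s).fun_sub ((hasDerivAt_id' s).const_mul c)
  have := is_const_of_deriv_eq_zero (fun s => (h' s).differentiableAt) (fun s => (h' s).deriv) t 0
  simp only [mul_zero, sub_zero] at this
  linarith

theorem hasDerivAt_comp_of_hasDerivAt_rotCW_gradient {f g : ℝ² → ℝ} (hf : Differentiable ℝ f)
    {γ : ℝ → ℝ²} {t : ℝ} (hγ : HasDerivAt γ (rotCW (gradient g (γ t))) t) :
    HasDerivAt (fun s => f (γ s)) ⟪gradient f (γ t), rotCW (gradient g (γ t))⟫_ℝ t := by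
  rw [inner_gradient_left]
  exact (hf (γ t)).hasFDerivAt.comp_hasDerivAt t hγ

theorem apply_eq_add_of_jacobian_eq_one {f₁ f₂ : ℝ² → ℝ} (hf₁ : Differentiable ℝ f₁)
    (hjac : ∀ p, gradient f₁ p 0 * gradient f₂ p 1 - gradient f₁ p 1 * gradient f₂ p 0 = 1)
    {γ : ℝ → ℝ²} (hγ : ∀ t, HasDerivAt γ (rotCW (gradient f₂ (γ t))) t) (t : ℝ) :
    f₁ (γ t) = f₁ (γ 0) + t := by
  have h := eq_add_mul_of_hasDerivAt (fun s => by
    simpa only [inner_rotCW, hjac] using hasDerivAt_comp_of_hasDerivAt_rotCW_gradient hf₁ (hγ s)) t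
  rwa [one_mul] at h

theorem apply_eq_of_hasDerivAt_rotCW_gradient {f : ℝ² → ℝ} (hf : Differentiable ℝ f)
    {γ : ℝ → ℝ²} (hγ : ∀ t, HasDerivAt γ (rotCW (gradient f (γ t))) t) (t : ℝ) :
    f (γ t) = f (γ 0) := by
  have h := eq_add_mul_of_hasDerivAt (fun s => by
    simpa only [inner_rotCW, mul_comm, sub_self] using
      hasDerivAt_comp_of_hasDerivAt_rotCW_gradient hf (hγ s)) t
  rwa [zero_mul, add_zero] at h

open Finset in
theorem MvPolynomial.eval_eq_sum_of_totalDegree_le {R : Type*} [CommSemiring R]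
    {P : MvPolynomial (Fin 2) R} {n : ℕ} (hP : P.totalDegree ≤ n) (g : Fin 2 → R) :
    eval g P = ∑ ij ∈ (range (n + 1) ×ˢ range (n + 1)).filter (fun ij => ij.1 + ij.2 ≤ n),
      coeff (Finsupp.single 0 ij.1 + Finsupp.single 1 ij.2) P * (g 0 ^ ij.1 * g 1 ^ ij.2) := by
  classical
  set S := (range (n + 1) ×ˢ range (n + 1)).filter (fun ij => ij.1 + ij.2 ≤ n)
  set φ : ℕ × ℕ → (Fin 2 →₀ ℕ) := fun ij => Finsupp.single 0 ij.1 + Finsupp.single 1 ij.2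
  have hφ : Set.InjOn φ S := fun ij _ ij' _ h =>
    Prod.ext (by simpa [φ] using congrArg (· 0) h) (by simpa [φ] using congrArg (· 1) h)
  calc eval g P = ∑ m ∈ P.support, coeff m P * ∏ k, g k ^ m k := eval_eq' g P
    _ = ∑ m ∈ S.image φ, coeff m P * ∏ k, g k ^ m k := by
      refine sum_subset (fun m hm => ?_) (fun m _ hm => by simp [notMem_support_iff.mp hm])
      have hdeg := (le_totalDegree hm).trans hP
      rw [Finsupp.sum_fintype _ _ (fun _ => rfl), Fin.sum_univ_two] at hdeg
      refine mem_image.mpr ⟨(m 0, m 1), by simp [S]; omega, ?_⟩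
      ext k
      fin_cases k <;> simp [φ]
    _ = _ := by
      rw [sum_image hφ]
      simp [φ, Fin.prod_univ_two]

structure PlaneQuadratic where
  (a b c d e k : ℝ)

namespace PlaneQuadratic

variable (Q : PlaneQuadratic)

def eval (p : ℝ²) : ℝ :=
  Q.a * p 0 ^ 2 + Q.b * p 0 * p 1 + Q.c * p 1 ^ 2 + Q.d * p 0 + Q.e * p 1 + Q.k

def grad (p : ℝ²) : ℝ² :=
  !₂[2 * Q.a * p 0 + Q.b * p 1 + Q.d, Q.b * p 0 + 2 * Q.c * p 1 + Q.e]

def discr : ℝ := Q.b ^ 2 - 4 * Q.a * Q.c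

/-- For `discr = 0`, `-kappa / 4` is the determinant of the `3 × 3` matrix of the conic, so
`kappa ≠ 0` exactly when the level sets of `eval` are parabolas. -/
def kappa : ℝ := Q.a * Q.e ^ 2 - Q.b * Q.d * Q.e + Q.c * Q.d ^ 2

/-- The Hessian applied to `rotCW (grad p)` (independent of `p` when `discr = 0`): the constant
velocity of `grad` along the flow. It is normal to the axis of the parabolas. -/
def axisNormal : ℝ² := !₂[2 * Q.a * Q.e - Q.b * Q.d, Q.b * Q.e - 2 * Q.c * Q.d]

/-- For `discr = 0`, the integral curve through `p` of the Hamiltonian field `rotCW ∘ grad`: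
that field is affine with nilpotent linear part, so the curve is quadratic in `t`. -/
def flow (p : ℝ²) (t : ℝ) : ℝ² := p + t • rotCW (Q.grad p) + (t ^ 2 / 2) • rotCW Q.axisNormal

def ofMvPolynomial (P : MvPolynomial (Fin 2) ℝ) : PlaneQuadratic where
  a := P.coeff (Finsupp.single 0 2)
  b := P.coeff (Finsupp.single 0 1 + Finsupp.single 1 1)
  c := P.coeff (Finsupp.single 1 2)
  d := P.coeff (Finsupp.single 0 1)
  e := P.coeff (Finsupp.single 1 1)
  k := P.coeff 0

theorem eval_ofMvPolynomial {P : MvPolynomial (Fin 2) ℝ} (hP : P.totalDegree ≤ 2) (p : ℝ²) :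
    (ofMvPolynomial P).eval p = MvPolynomial.eval (fun i => p i) P := by
  rw [MvPolynomial.eval_eq_sum_of_totalDegree_le hP]
  simp [Finset.sum_filter, Finset.sum_product, Finset.sum_range_succ, eval, ofMvPolynomial]
  ring

@[simp] theorem grad_apply_zero (p : ℝ²) : Q.grad p 0 = 2 * Q.a * p 0 + Q.b * p 1 + Q.d := rfl

@[simp] theorem grad_apply_one (p : ℝ²) : Q.grad p 1 = Q.b * p 0 + 2 * Q.c * p 1 + Q.e := rfl

@[simp] theorem axisNormal_apply_zero : Q.axisNormal 0 = 2 * Q.a * Q.e - Q.b * Q.d := rfl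

@[simp] theorem axisNormal_apply_one : Q.axisNormal 1 = Q.b * Q.e - 2 * Q.c * Q.d := rfl

theorem hasGradientAt_eval (p : ℝ²) : HasGradientAt Q.eval (Q.grad p) p := by
  have h0 := PiLp.hasFDerivAt_apply (𝕜 := ℝ) 2 p 0
  have h1 := PiLp.hasFDerivAt_apply (𝕜 := ℝ) 2 p 1
  rw [hasGradientAt_iff_hasFDerivAt]
  refine (((((((h0.pow 2).const_mul Q.a).add ((h0.mul h1).const_mul Q.b)).add
    ((h1.pow 2).const_mul Q.c)).add (h0.const_mul Q.d)).add (h1.const_mul Q.e)).add_const Q.k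
    |>.congr_fderiv ?_).congr_of_eventuallyEq (.of_forall fun q => ?_)
  · ext v
    simp [toDual_apply_apply, PiLp.inner_apply, Fin.sum_univ_two]
    ring
  · simp [eval, mul_assoc]

theorem differentiable_eval : Differentiable ℝ Q.eval :=
  fun p => (Q.hasGradientAt_eval p).differentiableAt

theorem gradient_eval : gradient Q.eval = Q.grad := gradient_eq Q.hasGradientAt_eval

theorem grad_eq_zero {p : ℝ²} (h0 : 2 * Q.a * p 0 + Q.b * p 1 + Q.d = 0)
    (h1 : Q.b * p 0 + 2 * Q.c * p 1 + Q.e = 0) : Q.grad p = 0 := by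
  ext i
  fin_cases i <;> simpa

theorem discr_eq_zero (h : ∀ p, Q.grad p ≠ 0) : Q.discr = 0 := by
  obtain ⟨a, b, c, d, e, k⟩ := Q
  by_contra hD
  change b ^ 2 - 4 * a * c ≠ 0 at hD
  generalize hD' : b ^ 2 - 4 * a * c = D at hD
  refine h !₂[(2 * c * d - b * e) / D, (2 * a * e - b * d) / D] (grad_eq_zero _ ?_ ?_)
  · simp only [Matrix.cons_val_zero, Matrix.cons_val_one]
    field_simp
    linear_combination -d * hD'
  · simp only [Matrix.cons_val_zero, Matrix.cons_val_one]
    field_simp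
    linear_combination -e * hD'

theorem eq_zero_of_kappa_eq_zero (h : ∀ p, Q.grad p ≠ 0) (hdisc : Q.discr = 0)
    (hκ : Q.kappa = 0) : Q.a = 0 ∧ Q.b = 0 ∧ Q.c = 0 := by
  obtain ⟨a, b, c, d, e, k⟩ := Q
  simp only [discr, kappa] at hdisc hκ ⊢
  have hac : a + c = 0 := by
    by_contra hs
    have h0 : 2 * a * e - b * d = 0 := pow_eq_zero_iff two_ne_zero |>.mp <| by
      linear_combination 4 * a * hκ + d ^ 2 * hdisc
    have h1 : b * e - 2 * c * d = 0 := pow_eq_zero_iff two_ne_zero |>.mp <| by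
      linear_combination 4 * c * hκ + e ^ 2 * hdisc
    refine h !₂[-d / (2 * (a + c)), -e / (2 * (a + c))] (grad_eq_zero _ ?_ ?_)
    · simp only [Matrix.cons_val_zero, Matrix.cons_val_one]
      field_simp
      linear_combination -h1
    · simp only [Matrix.cons_val_zero, Matrix.cons_val_one]
      field_simp
      linear_combination h0
  have ha : a = 0 := by nlinarith
  refine ⟨ha, ?_, ?_⟩ <;> nlinarith

@[simp] theorem flow_zero (p : ℝ²) : Q.flow p 0 = p := by simp [flow]

theorem grad_flow (hdisc : Q.discr = 0) (p : ℝ²) (t : ℝ) :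
    Q.grad (Q.flow p t) = Q.grad p + t • Q.axisNormal := by
  unfold discr at hdisc
  ext i
  fin_cases i
  · simp [flow]
    linear_combination (t ^ 2 / 2 * Q.d - t * p 1) * hdisc
  · simp [flow]
    linear_combination (t ^ 2 / 2 * Q.e + t * p 0) * hdisc

theorem hasDerivAt_flow (hdisc : Q.discr = 0) (p : ℝ²) (t : ℝ) :
    HasDerivAt (Q.flow p) (rotCW (Q.grad (Q.flow p t))) t := by
  have h : HasDerivAt (Q.flow p) (rotCW (Q.grad p) + t • rotCW Q.axisNormal) t := by
    refine (((hasDerivAt_id' t).smul_const (rotCW (Q.grad p))).const_add p |>.fun_add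
      (((hasDerivAt_pow 2 t).div_const 2).smul_const (rotCW Q.axisNormal))).congr_deriv ?_
    simp
  refine h.congr_deriv ?_
  ext i
  fin_cases i
  · simp [grad_flow Q hdisc]
  · simp [grad_flow Q hdisc]
    ring

theorem eval_flow (hdisc : Q.discr = 0) (p : ℝ²) (t : ℝ) : Q.eval (Q.flow p t) = Q.eval p := by
  have h := apply_eq_of_hasDerivAt_rotCW_gradient Q.differentiable_eval
    (fun s => Q.gradient_eval ▸ Q.hasDerivAt_flow hdisc p s) t
  rwa [flow_zero] at h

theorem inner_flow_axisNormal (hdisc : Q.discr = 0) (p : ℝ²) (t : ℝ) :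
    ⟪Q.flow p t, Q.axisNormal⟫_ℝ = ⟪p, Q.axisNormal⟫_ℝ + 2 * Q.kappa * t := by
  unfold discr at hdisc
  simp [flow, kappa, PiLp.inner_apply, Fin.sum_univ_two]
  linear_combination (-t * (Q.d * p 0 + Q.e * p 1)) * hdisc

/-- `eval` is injective on every line parallel to the axis of the parabolas. -/
theorem eq_zero_of_eval_add_eq (hdisc : Q.discr = 0) (hκ : Q.kappa ≠ 0) {p u : ℝ²}
    (hu : ⟪u, Q.axisNormal⟫_ℝ = 0) (hQ : Q.eval (p + u) = Q.eval p) : u = 0 := by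
  obtain ⟨a, b, c, d, e, k⟩ := Q
  simp only [discr, kappa, eval, axisNormal, PiLp.inner_apply, Fin.sum_univ_two, PiLp.add_apply,
    Matrix.cons_val_zero, Matrix.cons_val_one, RCLike.inner_apply, conj_trivial] at hdisc hκ hu hQ
  suffices h : u 0 = 0 ∧ u 1 = 0 by ext i; fin_cases i; exacts [h.1, h.2]
  generalize p 0 = x, p 1 = y, u 0 = v, u 1 = w at *
  set κ := a * e ^ 2 - b * d * e + c * d ^ 2
  set n₀ := 2 * a * e - b * d
  set n₁ := b * e - 2 * c * d
  set ρ := a * v ^ 2 + b * v * w + c * w ^ 2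
  have hQ' : (2 * a * x + b * y + d) * v + (b * x + 2 * c * y + e) * w + ρ = 0 := by
    linear_combination hQ
  -- `hv`, `hw` solve `⟪u, axisNormal⟫ = 0`, `⟪grad p, u⟫ = -ρ` for `u`;
  -- `hρv`, `hρw` say that the quadratic part `ρ` vanishes along the axis
  have hv : 2 * κ * v = n₁ * ρ := by
    linear_combination (b * x + 2 * c * y + e) * hu - n₁ * hQ' + (d * x + e * y) * v * hdisc
  have hw : 2 * κ * w = -n₀ * ρ := by
    linear_combination n₀ * hQ' - (2 * a * x + b * y + d) * hu + (d * x + e * y) * w * hdisc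
  have hρv : n₁ ^ 2 * ρ = 0 := by
    linear_combination (b * v * n₁ + c * (n₁ * w - n₀ * v)) * hu - κ * v ^ 2 * hdisc
  have hρw : n₀ ^ 2 * ρ = 0 := by
    linear_combination (a * (n₀ * v - n₁ * w) + b * w * n₀) * hu - κ * w ^ 2 * hdisc
  have hv2 : (2 * κ * v) ^ 2 = 0 := by
    linear_combination (2 * κ * v + n₁ * ρ) * hv + ρ * hρv
  have hw2 : (2 * κ * w) ^ 2 = 0 := by
    linear_combination (2 * κ * w - n₀ * ρ) * hw + ρ * hρw
  exact ⟨by simpa [hκ] using hv2, by simpa [hκ] using hw2⟩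

theorem exists_flow_eq (h : ∀ p, Q.grad p ≠ 0) {p q : ℝ²} (hpq : Q.eval p = Q.eval q) :
    ∃ t, Q.flow p t = q := by
  have hdisc := Q.discr_eq_zero h
  by_cases hκ : Q.kappa = 0
  · obtain ⟨ha, hb, hc⟩ := Q.eq_zero_of_kappa_eq_zero h hdisc hκ
    have hde : Q.d ^ 2 + Q.e ^ 2 ≠ 0 := fun hde =>
      h 0 (Q.grad_eq_zero (by simp [ha, hb]; nlinarith) (by simp [hb, hc]; nlinarith))
    simp only [eval, ha, hb, hc] at hpq
    refine ⟨(Q.e * (q 0 - p 0) - Q.d * (q 1 - p 1)) / (Q.d ^ 2 + Q.e ^ 2), ?_⟩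
    ext i
    fin_cases i
    · simp [flow, hb, hc]
      field_simp
      linear_combination Q.d * hpq
    · simp [flow, ha, hb]
      field_simp
      linear_combination Q.e * hpq
  · -- the time at which the flow reaches the line through `q` parallel to the axis
    set t := (⟪q, Q.axisNormal⟫_ℝ - ⟪p, Q.axisNormal⟫_ℝ) / (2 * Q.kappa)
    refine ⟨t, ?_⟩
    rw [← sub_eq_zero, ← neg_sub]
    refine neg_eq_zero.mpr (Q.eq_zero_of_eval_add_eq hdisc hκ (p := Q.flow p t) ?_ ?_)
    · rw [inner_sub_left, inner_flow_axisNormal Q hdisc]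
      simp only [t]
      field_simp
      ring
    · rw [add_sub_cancel, eval_flow Q hdisc, hpq]

end PlaneQuadratic

end

theorem stmt_15_general (f₁ f₂ : EuclideanSpace ℝ (Fin 2) → ℝ)
    (hf₁ : ContDiff ℝ (⊤ : ℕ∞) f₁)
    (hjac : ∀ p : EuclideanSpace ℝ (Fin 2),
      gradient f₁ p 0 * gradient f₂ p 1 - gradient f₁ p 1 * gradient f₂ p 0 = 1)
    (P : MvPolynomial (Fin 2) ℝ) (hdeg : P.totalDegree ≤ 2)
    (hP : ∀ p : EuclideanSpace ℝ (Fin 2), f₂ p = MvPolynomial.eval (fun i => p i) P) :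
    Function.Injective (fun p : EuclideanSpace ℝ (Fin 2) => (f₁ p, f₂ p)) := by
  set Q := PlaneQuadratic.ofMvPolynomial P
  obtain rfl : f₂ = Q.eval :=
    funext fun p => (hP p).trans (PlaneQuadratic.eval_ofMvPolynomial hdeg p).symm
  have hgrad_ne : ∀ p, Q.grad p ≠ 0 := fun p h => by simpa [Q.gradient_eval, h] using hjac p
  have hdisc := Q.discr_eq_zero hgrad_ne
  intro p q hpq
  obtain ⟨hf₁pq, hf₂pq⟩ := Prod.mk.inj hpq
  obtain ⟨t, rfl⟩ := Q.exists_flow_eq hgrad_ne hf₂pq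
  have hgrowth := apply_eq_add_of_jacobian_eq_one (hf₁.differentiable (by simp)) hjac
    (fun s => Q.gradient_eval ▸ Q.hasDerivAt_flow hdisc p s) t
  rw [Q.flow_zero] at hgrowth
  obtain rfl : t = 0 := by linarith
  exact (Q.flow_zero p).symm

/-- Remark 3.9: if `F = (f₁, f₂) : ℝ² → ℝ²` is smooth with Jacobian determinant
identically `1` and `f₂` is a polynomial of degree at most `2`, then `F` is injective. -/
theorem stmt_15 (f₁ f₂ : EuclideanSpace ℝ (Fin 2) → ℝ)
    (hf₁ : ContDiff ℝ (⊤ : ℕ∞) f₁) (hf₂ : ContDiff ℝ (⊤ : ℕ∞) f₂)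
    (hjac : ∀ p : EuclideanSpace ℝ (Fin 2),
      gradient f₁ p 0 * gradient f₂ p 1 - gradient f₁ p 1 * gradient f₂ p 0 = 1)
    (P : MvPolynomial (Fin 2) ℝ) (hdeg : P.totalDegree ≤ 2)
    (hP : ∀ p : EuclideanSpace ℝ (Fin 2), f₂ p = MvPolynomial.eval (fun i => p i) P) :
    Function.Injective (fun p : EuclideanSpace ℝ (Fin 2) => (f₁ p, f₂ p)) :=
  stmt_15_general f₁ f₂ hf₁ hjac P hdeg hP
end

section
/- Let f(x,y) := x − x³y² and g(x,y) := y on ℝ². Then the fiber gradient is ∇_g f(x,y) = (1 − 3x²y², 0), and for every ε > 0 and every R > 0 there exists a point (x,y) ∈ ℝ² with 0 < |y| < ε, ‖(x,y)‖ > R, and ∇_g f(x,y) = 0. In particular, for no ε > 0 does f satisfy a Malgrange-type inequality using ∇_g f on the strip g⁻¹((−ε, ε)). -/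
/-!
Because `g` is a coordinate function, `∇_g f` is `∇f` with its `y`-component deleted, i.e.
`(1 − 3x²y², 0)`. It vanishes on the hyperbolas `xy = ±1/√3`, which run off to infinity while
approaching the axis `y = 0`; at those points `‖∇_g f(v)‖ ‖v‖ = 0`, so no Malgrange-type bound
holds on any strip.
-/

open InnerProductSpace

-- Where `∇g v = 0` the junk value `x / 0 = 0` makes this `∇f v`.
noncomputable def fiberGradient {F : Type*} [NormedAddCommGroup F] [InnerProductSpace ℝ F]
    [CompleteSpace F] (f g : F → ℝ) (v : F) : F :=
  gradient f v - (⟪gradient f v, gradient g v⟫_ℝ / ‖gradient g v‖ ^ 2) • gradient g v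

section Coordinates

variable {ι : Type*} [Fintype ι] [DecidableEq ι]

theorem EuclideanSpace.hasGradientAt_apply (i : ι) (v : EuclideanSpace ℝ ι) :
    HasGradientAt (fun w : EuclideanSpace ℝ ι => w i) (EuclideanSpace.single i 1) v := by
  rw [hasGradientAt_iff_hasFDerivAt]
  refine (PiLp.hasFDerivAt_apply (𝕜 := ℝ) 2 v i).congr_fderiv ?_
  ext u
  simp [EuclideanSpace.inner_single_left]

theorem fiberGradient_apply_coord (f : EuclideanSpace ℝ ι → ℝ) (i j : ι)
    (v : EuclideanSpace ℝ ι) :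
    fiberGradient f (fun w => w i) v j = if j = i then 0 else gradient f v j := by
  rw [fiberGradient, (EuclideanSpace.hasGradientAt_apply i v).gradient,
    EuclideanSpace.inner_single_right, PiLp.norm_single]
  split_ifs with h <;> simp [h]

end Coordinates

theorem hasGradientAt_sub_cube_mul_sq (v : EuclideanSpace ℝ (Fin 2)) :
    HasGradientAt (fun w : EuclideanSpace ℝ (Fin 2) => w 0 - w 0 ^ 3 * w 1 ^ 2)
      !₂[1 - 3 * v 0 ^ 2 * v 1 ^ 2, -(2 * v 0 ^ 3 * v 1)] v := by
  rw [hasGradientAt_iff_hasFDerivAt]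
  have h0 := PiLp.hasFDerivAt_apply (𝕜 := ℝ) 2 v 0
  have h1 := PiLp.hasFDerivAt_apply (𝕜 := ℝ) 2 v 1
  refine (h0.sub ((h0.pow 3).mul (h1.pow 2))).congr_fderiv ?_
  ext u
  simp only [Fin.isValue, Nat.add_one_sub_one, pow_one, nsmul_eq_mul, Nat.cast_ofNat,
    sub_apply, PiLp.proj_apply, add_apply, smul_apply, smul_eq_mul, toDual_apply_apply,
    PiLp.inner_apply, RCLike.inner_apply, Real.ringHom_apply, Fin.sum_univ_two,
    Matrix.cons_val_zero, Matrix.cons_val_one, Matrix.cons_val_fin_one]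
  ring

theorem fiberGradient_sub_cube_mul_sq (v : EuclideanSpace ℝ (Fin 2)) :
    fiberGradient (fun w => w 0 - w 0 ^ 3 * w 1 ^ 2) (fun w => w 1) v
      = !₂[1 - 3 * v 0 ^ 2 * v 1 ^ 2, 0] := by
  ext j
  fin_cases j <;> simp [fiberGradient_apply_coord, (hasGradientAt_sub_cube_mul_sq v).gradient]

theorem exists_gt_lt_three_mul_sq_mul_sq_eq_one (R ε : ℝ) (hε : 0 < ε) :
    ∃ a b : ℝ, R < a ∧ 0 < b ∧ b < ε ∧ 3 * a ^ 2 * b ^ 2 = 1 := by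
  have hR : R ≤ |R| := le_abs_self R
  have hsqrt3 : 1 < √3 := by rw [Real.lt_sqrt zero_le_one]; norm_num
  set a := |R| + 1 / ε
  have ha : R < a := by have := one_div_pos.2 hε; linarith
  have hεa : 1 ≤ ε * a := by
    rw [mul_add, mul_one_div_cancel hε.ne']; nlinarith [abs_nonneg R]
  have ha0 : 0 < a := by positivity
  refine ⟨a, 1 / (√3 * a), ha, by positivity, ?_, ?_⟩
  · rw [div_lt_iff₀ (by positivity)]
    nlinarith
  · field_simp
    rw [Real.sq_sqrt (by norm_num)]

/-- Example 2.3: for `f(x,y) = x − x³y²` and `g(x,y) = y`, the fiber gradient is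
`∇_g f(x,y) = (1 − 3x²y², 0)`; it vanishes at points with arbitrarily small `|y| ≠ 0`
and arbitrarily large norm, so for no `ε > 0` does `f` satisfy a Malgrange-type
inequality using `∇_g f` on the strip `g⁻¹((−ε, ε))`. -/
theorem stmt_18 (f g : EuclideanSpace ℝ (Fin 2) → ℝ)
    (hf : ∀ v, f v = v 0 - (v 0) ^ 3 * (v 1) ^ 2)
    (hg : ∀ v, g v = v 1)
    (gradgf : EuclideanSpace ℝ (Fin 2) → EuclideanSpace ℝ (Fin 2))
    (hgradgf : ∀ v, gradgf v =
      gradient f v - ((inner ℝ (gradient f v) (gradient g v) : ℝ) / ‖gradient g v‖ ^ 2) •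
        gradient g v) :
    (∀ v : EuclideanSpace ℝ (Fin 2),
      gradgf v 0 = 1 - 3 * (v 0) ^ 2 * (v 1) ^ 2 ∧ gradgf v 1 = 0) ∧
    (∀ ε > (0 : ℝ), ∀ R > (0 : ℝ), ∃ v : EuclideanSpace ℝ (Fin 2),
      0 < |v 1| ∧ |v 1| < ε ∧ R < ‖v‖ ∧ gradgf v = 0) ∧
    (∀ ε > (0 : ℝ), ¬ ∃ δ > (0 : ℝ), ∃ R > (0 : ℝ),
      ∀ v : EuclideanSpace ℝ (Fin 2), |g v| < ε → R ≤ ‖v‖ → δ ≤ ‖gradgf v‖ * ‖v‖) := by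
  obtain rfl : f = fun w => w 0 - w 0 ^ 3 * w 1 ^ 2 := funext hf
  obtain rfl : g = fun w => w 1 := funext hg
  have hgradgf' v : gradgf v = !₂[1 - 3 * v 0 ^ 2 * v 1 ^ 2, 0] :=
    (hgradgf v).trans (fiberGradient_sub_cube_mul_sq v)
  have critical (ε : ℝ) (hε : 0 < ε) (R : ℝ) : ∃ v : EuclideanSpace ℝ (Fin 2),
      0 < |v 1| ∧ |v 1| < ε ∧ R < ‖v‖ ∧ gradgf v = 0 := by
    obtain ⟨a, b, hRa, hb, hbε, hab⟩ := exists_gt_lt_three_mul_sq_mul_sq_eq_one R ε hε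
    refine ⟨!₂[a, b], by simpa using hb.ne', by simpa [abs_of_pos hb] using hbε, ?_, ?_⟩
    · calc R < |a| := hRa.trans_le (le_abs_self a)
        _ ≤ ‖!₂[a, b]‖ := by simpa using PiLp.norm_apply_le (!₂[a, b]) 0
    · rw [hgradgf']
      simp [hab]
  refine ⟨fun v => by simp [hgradgf'], fun ε hε R _ => critical ε hε R, ?_⟩
  rintro ε hε ⟨δ, hδ, R, -, hbound⟩
  obtain ⟨v, -, hvε, hRv, hv⟩ := critical ε hε R
  have hδ0 : δ ≤ 0 := by simpa [hv] using hbound v hvε hRv.le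
  exact hδ.not_ge hδ0
end
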